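/- arXiv:2307.14037 — 3 statements merged into one kernel-verified Lean document; each statement's English description precedes it below -/
import Mathlib

section
/- Let n be an odd integer greater than 1, C > 0, and let N be the smallest integer with N ≥ π^{-2}C + 1. For t ∈ (-1,1] and integers k with |k| ≥ N, define the open disks U(k,t) = {λ ∈ ℂ : |λ - (2πk+πt)^n| < (3/2)π^{n-2}C|2k+t|^{n-2}} and the strip S(N,t) = {λ ∈ ℂ : Re λ ∈ [(-2πN+π+πt)^n, (2πN-π+πt)^n)}. Then the closures of S(N,t) and of the disks U(k,t) for |k| ≥ N are pairwise disjoint. -/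
/-!
Write `c k = π (2k + t)`, so that `U k` is the disk of radius `(3/2) C |c k| ^ (n - 2)` around
`c k ^ n`. For `|k| ≥ N` we have `|c k| ≥ π (2N - 1) ≥ π + 2C/π`, and the bound
`u ^ n - v ^ n ≥ (u - v) u ^ (n - 1)` for `0 ≤ v ≤ u` shows that the real part of any point of the
closed disk lies strictly between `(c k - π) ^ n` and `(c k + π) ^ n`. The closed strip projects into
`[(c (-N) + π) ^ n, (c N - π) ^ n]`. The real intervals `(c k - π, c k + π)` for `|k| ≥ N` and
`[c (-N) + π, c N - π]` are pairwise disjoint and `x ↦ x ^ n` is strictly increasing for odd `n`,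
so the projections, and hence the sets, are disjoint.
-/

open Real Complex Set

lemma sub_mul_pow_le_pow_succ_sub_pow_succ {R : Type*} [CommRing R] [LinearOrder R]
    [IsStrictOrderedRing R] {x y : R} (hy : 0 ≤ y) (hyx : y ≤ x) (m : ℕ) :
    (x - y) * x ^ m ≤ x ^ (m + 1) - y ^ (m + 1) := by
  have key : x ^ (m + 1) - y ^ (m + 1) - (x - y) * x ^ m = y * (x ^ m - y ^ m) := by ring
  nlinarith [mul_nonneg hy (sub_nonneg.2 (pow_le_pow_left₀ hy hyx m))]

lemma pow_sub_add_mul_pow_lt_pow {h u K : ℝ} (hh : 0 < h) (hu : h ≤ u) (hK : K < h * u) (m : ℕ) :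
    (u - h) ^ (m + 2) + K * u ^ m < u ^ (m + 2) := by
  have hgap := sub_mul_pow_le_pow_succ_sub_pow_succ (by linarith : 0 ≤ u - h) (by linarith : u - h ≤ u) (m + 1)
  rw [sub_sub_cancel] at hgap
  have hKu : K * u ^ m < h * u ^ (m + 1) :=
    calc K * u ^ m < h * u * u ^ m := mul_lt_mul_of_pos_right hK (pow_pos (by linarith) m)
      _ = h * u ^ (m + 1) := by ring
  linarith

lemma pow_add_mul_pow_lt_pow_add {h u K : ℝ} (hh : 0 < h) (hu : 0 < u) (hK : K < h * u) (m : ℕ) :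
    u ^ (m + 2) + K * u ^ m < (u + h) ^ (m + 2) := by
  have hgap := sub_mul_pow_le_pow_succ_sub_pow_succ hu.le (by linarith : u ≤ u + h) (m + 1)
  rw [add_sub_cancel_left] at hgap
  have hKu : K * u ^ m < h * (u + h) ^ (m + 1) :=
    calc K * u ^ m < h * u * u ^ m := mul_lt_mul_of_pos_right hK (pow_pos hu m)
      _ = h * u ^ (m + 1) := by ring
      _ ≤ h * (u + h) ^ (m + 1) := by gcongr; linarith
  linarith

lemma Odd.pow_sub_lt_and_lt_pow_add {n : ℕ} (hn : Odd n) (hn1 : 1 < n) {h x K : ℝ} (hh : 0 < h)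
    (hx : h ≤ |x|) (hK : K < h * |x|) :
    (x - h) ^ n < x ^ n - K * |x| ^ (n - 2) ∧ x ^ n + K * |x| ^ (n - 2) < (x + h) ^ n := by
  wlog hx0 : 0 ≤ x generalizing x
  · have hneg := this (x := -x) (by rwa [abs_neg]) (by rwa [abs_neg]) (by linarith)
    rw [abs_neg, show -x - h = -(x + h) by ring, show -x + h = -(x - h) by ring,
      hn.neg_pow, hn.neg_pow, hn.neg_pow] at hneg
    constructor <;> linarith [hneg.1, hneg.2]
  obtain ⟨m, rfl⟩ : ∃ m, n = m + 2 := ⟨n - 2, by omega⟩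
  rw [abs_of_nonneg hx0] at hx hK ⊢
  rw [Nat.add_sub_cancel]
  exact ⟨by linarith [pow_sub_add_mul_pow_lt_pow hh hx hK m],
    pow_add_mul_pow_lt_pow_add hh (by linarith) hK m⟩

lemma closure_ball_subset_re_preimage_Icc (z : ℂ) (r : ℝ) :
    closure (Metric.ball z r) ⊆ re ⁻¹' Icc (z.re - r) (z.re + r) := by
  intro w hw
  have hdist : ‖w - z‖ ≤ r := by
    simpa [Complex.dist_eq] using Metric.closure_ball_subset_closedBall hw
  have hre : |w.re - z.re| ≤ r := by
    simpa using (abs_re_le_norm (w - z)).trans hdist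
  exact ⟨by linarith [(abs_le.1 hre).1], by linarith [(abs_le.1 hre).2]⟩

lemma closure_re_preimage_Ico_subset (a b : ℝ) :
    closure (re ⁻¹' Ico a b) ⊆ re ⁻¹' Icc a b := by
  rw [closure_preimage_re]
  exact preimage_mono (closure_minimal Ico_subset_Icc_self isClosed_Icc)

lemma Odd.re_mem_Ioo_of_mem_closure_ball {n : ℕ} (hn : Odd n) (hn1 : 1 < n) {h x K : ℝ}
    (hh : 0 < h) (hx : h ≤ |x|) (hK : K < h * |x|) {lam : ℂ}
    (hlam : lam ∈ closure (Metric.ball ((x ^ n : ℝ) : ℂ) (K * |x| ^ (n - 2)))) :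
    lam.re ∈ Ioo ((x - h) ^ n) ((x + h) ^ n) := by
  obtain ⟨hlo, hhi⟩ := hn.pow_sub_lt_and_lt_pow_add hn1 hh hx hK
  obtain ⟨hre_lo, hre_hi⟩ := closure_ball_subset_re_preimage_Icc _ _ hlam
  rw [ofReal_re] at hre_lo hre_hi
  exact ⟨by linarith, by linarith⟩

lemma two_mul_sub_one_le_abs_two_mul_add {N k : ℤ} (hk : N ≤ |k|) {t : ℝ}
    (ht : t ∈ Ioc (-1 : ℝ) 1) : 2 * (N : ℝ) - 1 ≤ |2 * (k : ℝ) + t| := by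
  have hkr : (N : ℝ) ≤ |(k : ℝ)| := by exact_mod_cast hk
  have ht' : |t| ≤ 1 := abs_le.2 ⟨ht.1.le, ht.2⟩
  have htri := abs_sub_abs_le_abs_sub (2 * (k : ℝ)) (-t)
  rw [sub_neg_eq_add, abs_neg, abs_mul, abs_two] at htri
  linarith

lemma pi_le_abs_and_lt_pi_mul_abs {C : ℝ} (hC : 0 < C) {N : ℤ} (hN : (N : ℝ) ≥ C / π ^ 2 + 1)
    {k : ℤ} (hk : N ≤ |k|) {t : ℝ} (ht : t ∈ Ioc (-1 : ℝ) 1) :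
    π ≤ |2 * π * k + π * t| ∧ 3 / 2 * C < π * |2 * π * k + π * t| := by
  have hk' := two_mul_sub_one_le_abs_two_mul_add hk ht
  have hCN : C ≤ ((N : ℝ) - 1) * π ^ 2 := by
    have := (div_le_iff₀ (by positivity : (0 : ℝ) < π ^ 2)).1 (by linarith : C / π ^ 2 ≤ N - 1)
    linarith
  have habs : |2 * π * k + π * t| = π * |2 * (k : ℝ) + t| := by
    rw [show 2 * π * k + π * t = π * (2 * k + t) by ring, abs_mul, abs_of_pos pi_pos]
  rw [habs]
  have hπ := pi_pos
  constructor <;> nlinarith [mul_le_mul_of_nonneg_left hk' hπ.le, sq_nonneg π]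

lemma re_mem_Ioo_of_mem_closure_disk {n : ℕ} (hn : Odd n) (hn1 : 1 < n) {C : ℝ} (hC : 0 < C)
    {N : ℤ} (hN : (N : ℝ) ≥ C / π ^ 2 + 1) {k : ℤ} (hk : N ≤ |k|) {t : ℝ}
    (ht : t ∈ Ioc (-1 : ℝ) 1) {lam : ℂ}
    (hlam : lam ∈ closure {lam : ℂ | ‖lam - ((2 * π * k + π * t) ^ n : ℝ)‖ <
      (3 / 2) * π ^ (n - 2) * C * |2 * (k : ℝ) + t| ^ (n - 2)}) :
    lam.re ∈ Ioo ((2 * π * k + π * t - π) ^ n) ((2 * π * k + π * t + π) ^ n) := by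
  obtain ⟨hπ, hK⟩ := pi_le_abs_and_lt_pi_mul_abs hC hN hk ht
  refine hn.re_mem_Ioo_of_mem_closure_ball hn1 pi_pos hπ hK ?_
  have hradius : 3 / 2 * π ^ (n - 2) * C * |2 * (k : ℝ) + t| ^ (n - 2) =
      3 / 2 * C * |2 * π * k + π * t| ^ (n - 2) := by
    rw [show 2 * π * k + π * t = π * (2 * k + t) by ring, abs_mul, abs_of_pos pi_pos, mul_pow]
    ring
  rw [hradius] at hlam
  simpa only [Metric.ball, Complex.dist_eq] using hlam

theorem stmt3_general (n : ℕ) (hn : Odd n) (hn1 : 1 < n)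
    (C : ℝ) (hC : 0 < C) (N : ℤ)
    (hN : (N : ℝ) ≥ C / π ^ 2 + 1)
    (t : ℝ) (ht : t ∈ Set.Ioc (-1 : ℝ) 1)
    (U : ℤ → Set ℂ)
    (hU : ∀ k : ℤ, U k = {lam : ℂ |
      ‖lam - ((2 * π * k + π * t) ^ n : ℝ)‖ <
        (3 / 2) * π ^ (n - 2) * C * |2 * (k : ℝ) + t| ^ (n - 2)})
    (S : Set ℂ)
    (hS : S = {lam : ℂ | lam.re ∈
      Set.Ico ((-(2 * π * N) + π + π * t) ^ n) ((2 * π * N - π + π * t) ^ n)}) :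
    (∀ k : ℤ, N ≤ |k| → Disjoint (closure S) (closure (U k))) ∧
    (∀ k l : ℤ, N ≤ |k| → N ≤ |l| → k ≠ l →
      Disjoint (closure (U k)) (closure (U l))) := by
  set c : ℤ → ℝ := fun k ↦ 2 * π * k + π * t with hc
  have hdisk : ∀ k, N ≤ |k| → ∀ lam ∈ closure (U k), lam.re ∈ Ioo ((c k - π) ^ n) ((c k + π) ^ n) :=
    fun k hk lam hlam ↦ re_mem_Ioo_of_mem_closure_disk hn hn1 hC hN hk ht (hU k ▸ hlam)
  have hstrip : ∀ lam ∈ closure S,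
      lam.re ∈ Icc ((-(2 * π * N) + π + π * t) ^ n) ((2 * π * N - π + π * t) ^ n) := by
    rw [hS]
    exact closure_re_preimage_Ico_subset _ _
  have hπ := pi_pos
  refine ⟨fun k hk ↦ Set.disjoint_left.2 fun lam hlamS hlamU ↦ ?_,
    fun k l hk hl hkl ↦ ?_⟩
  · have hre := hdisk k hk lam hlamU
    have hreS := hstrip lam hlamS
    rcases le_abs'.1 hk with hneg | hpos
    · have hkr : (k : ℝ) ≤ -N := by exact_mod_cast hneg
      have hmono : (c k + π) ^ n ≤ (-(2 * π * N) + π + π * t) ^ n :=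
        hn.pow_le_pow.2 (by simp only [hc]; nlinarith)
      linarith [hre.2, hreS.1]
    · have hkr : (N : ℝ) ≤ k := by exact_mod_cast hpos
      have hmono : (2 * π * N - π + π * t) ^ n ≤ (c k - π) ^ n :=
        hn.pow_le_pow.2 (by simp only [hc]; nlinarith)
      linarith [hre.1, hreS.2]
  · wlog hlt : k < l generalizing k l
    · exact (this l k hl hk hkl.symm (lt_of_le_of_ne (not_lt.1 hlt) hkl.symm)).symm
    refine Set.disjoint_left.2 fun lam hlamk hlaml ↦ ?_
    have hkl' : (k : ℝ) + 1 ≤ l := by exact_mod_cast hlt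
    have hmono : (c k + π) ^ n ≤ (c l - π) ^ n := hn.pow_le_pow.2 (by simp only [hc]; nlinarith)
    linarith [(hdisk k hk lam hlamk).2, (hdisk l hl lam hlaml).1]

theorem stmt3 (n : ℕ) (hn : Odd n) (hn1 : 1 < n)
    (C : ℝ) (hC : 0 < C) (N : ℤ)
    (hN : (N : ℝ) ≥ C / π ^ 2 + 1)
    (hNmin : ∀ M : ℤ, (M : ℝ) ≥ C / π ^ 2 + 1 → N ≤ M)
    (t : ℝ) (ht : t ∈ Set.Ioc (-1 : ℝ) 1)
    (U : ℤ → Set ℂ)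
    (hU : ∀ k : ℤ, U k = {lam : ℂ |
      ‖lam - ((2 * π * k + π * t) ^ n : ℝ)‖ <
        (3 / 2) * π ^ (n - 2) * C * |2 * (k : ℝ) + t| ^ (n - 2)})
    (S : Set ℂ)
    (hS : S = {lam : ℂ | lam.re ∈
      Set.Ico ((-(2 * π * N) + π + π * t) ^ n) ((2 * π * N - π + π * t) ^ n)}) :
    (∀ k : ℤ, N ≤ |k| → Disjoint (closure S) (closure (U k))) ∧
    (∀ k l : ℤ, N ≤ |k| → N ≤ |l| → k ≠ l →
      Disjoint (closure (U k)) (closure (U l))) :=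
  stmt3_general n hn hn1 C hC N hN t ht U hU S hS
end

section
/- Let n be an odd integer greater than 1, t ∈ (-1,1], C > 0 with C ≤ π²·2^{-n+1/2}. Then the closures of the disks U(0,t) = {|λ - (πt)ⁿ| < πⁿ/5}, U(1,t) = {|λ - (2π+πt)ⁿ| < (3/10)|2+t|^{n-2}πⁿ}, U(-1,t) = {|λ - (πt-2π)ⁿ| < (3/10)|t-2|^{n-2}πⁿ}, and U(k,t) = {|λ - (2πk+πt)ⁿ| < (3/2)π^{n-2}C|2k+t|^{n-2}} for |k| > 1 are pairwise disjoint subsets of ℂ. -/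
/-!
All disks have real centres `(2πk + πt)ⁿ = πⁿ (2k + t)ⁿ`, and every radius is at most
`(3/10) πⁿ max(|2k + t|, 1)ⁿ⁻²` (for `|k| > 1` because `C ≤ π² / 5`). Writing `a = 2k + t`,
consecutive centres differ by `πⁿ ((a + 2)ⁿ - aⁿ)`, which for odd `n` exceeds the sum of the two
radius bounds for every real `a`. Hence the intervals `[c_k - R_k, c_k + R_k]` on the real axis
increase strictly with `k`, and the closed disks are pairwise disjoint.
-/

open Real Complex Metric Function

lemma closure_setOf_norm_sub_lt_subset_closedBall {E : Type*} [SeminormedAddCommGroup E]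
    {x : E} {r R : ℝ} (h : r ≤ R) : closure {z : E | ‖z - x‖ < r} ⊆ closedBall x R := by
  have hball : {z : E | ‖z - x‖ < r} = ball x r := by ext z; simp [dist_eq_norm]
  rw [hball]
  exact closure_ball_subset_closedBall.trans (closedBall_subset_closedBall h)

theorem pairwise_disjoint_closedBall_ofReal {c r : ℤ → ℝ} (hr : ∀ k, 0 ≤ r k)
    (hgap : ∀ k, r k + r (k + 1) < c (k + 1) - c k) :
    Pairwise (Disjoint on fun k => closedBall (c k : ℂ) (r k)) := by
  have hmono : StrictMono fun k => c k + r k :=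
    strictMono_int_of_lt_succ fun k => by linarith [hgap k, hr (k + 1)]
  have hsep : ∀ k l, k < l → r k + r l < c l - c k := by
    intro k l hkl
    have hle := hmono.monotone (Int.le_sub_one_of_lt hkl)
    have hlast := hgap (l - 1)
    rw [sub_add_cancel] at hlast
    linarith [hr (l - 1)]
  intro k l hkl
  wlog h : k < l generalizing k l
  · exact (this hkl.symm (lt_of_le_of_ne (not_lt.mp h) hkl.symm)).symm
  refine closedBall_disjoint_closedBall ?_
  rw [isometry_ofReal.dist_eq, Real.dist_eq, abs_sub_comm]
  exact (hsep k l h).trans_le (le_abs_self _)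

lemma three_tenths_max_pow_lt_pow_sub_pow_of_neg_one_le {p : ℕ} (hp : Odd p) {a : ℝ}
    (ha : -1 ≤ a) :
    3 / 10 * max |a| 1 ^ p + 3 / 10 * max |a + 2| 1 ^ p < (a + 2) ^ (p + 2) - a ^ (p + 2) := by
  set b := a + 2
  have hb1 : 1 ≤ b := by linarith
  have hMa : max |a| 1 ≤ b := max_le (abs_le.mpr ⟨by linarith, by linarith⟩) hb1
  have hMb : max |b| 1 = b := by rw [abs_of_pos (by linarith), max_eq_left hb1]
  have hbp : 1 ≤ b ^ p := one_le_pow₀ hb1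
  have hlhs : 3 / 10 * max |a| 1 ^ p + 3 / 10 * max |b| 1 ^ p ≤ 3 / 5 * b ^ p := by
    rw [hMb]
    have := pow_le_pow_left₀ (by positivity) hMa p
    linarith
  have hsplit : b ^ (p + 2) = b ^ p * b ^ 2 := pow_add b p 2
  rcases le_total a 0 with ha0 | ha0
  · have : a ^ (p + 2) ≤ 0 := (hp.add_even even_two).pow_nonpos ha0
    have : b ^ p ≤ b ^ p * b ^ 2 := le_mul_of_one_le_right (by positivity) (one_le_pow₀ hb1)
    linarith
  · have hap : a ^ p ≤ b ^ p := pow_le_pow_left₀ ha0 (by linarith) p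
    have : a ^ (p + 2) ≤ b ^ p * a ^ 2 := by
      rw [pow_add]; exact mul_le_mul_of_nonneg_right hap (sq_nonneg a)
    have : b ^ p * (a ^ 2 + 4) ≤ b ^ p * b ^ 2 :=
      mul_le_mul_of_nonneg_left (by nlinarith) (by positivity)
    linarith

lemma three_tenths_max_pow_lt_pow_sub_pow {p : ℕ} (hp : Odd p) (a : ℝ) :
    3 / 10 * max |a| 1 ^ p + 3 / 10 * max |a + 2| 1 ^ p < (a + 2) ^ (p + 2) - a ^ (p + 2) := by
  rcases le_or_gt (-1) a with ha | ha
  · exact three_tenths_max_pow_lt_pow_sub_pow_of_neg_one_le hp ha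
  · -- `a ↦ -2 - a` swaps `|a|` and `|a + 2|` and preserves the right side, as `p + 2` is odd.
    have h := three_tenths_max_pow_lt_pow_sub_pow_of_neg_one_le hp (a := -2 - a) (by linarith)
    have hodd := hp.add_even even_two
    rw [show -2 - a + 2 = -a by ring, show -2 - a = -(a + 2) by ring, abs_neg, abs_neg,
      hodd.neg_pow, hodd.neg_pow] at h
    linarith

lemma two_rpow_neg_add_half_le {n : ℕ} (hn : 3 ≤ n) : (2 : ℝ) ^ (-(n : ℝ) + 1 / 2) ≤ 1 / 5 := by
  have hsqrt : (2 : ℝ) ^ (-(n : ℝ) + 1 / 2) = √2 / 2 ^ n := by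
    rw [rpow_add two_pos, rpow_neg zero_le_two, rpow_natCast, ← sqrt_eq_rpow]
    ring
  have hs : √2 ≤ 3 / 2 := sqrt_le_iff.mpr ⟨by norm_num, by norm_num⟩
  have h8 : (8 : ℝ) ≤ 2 ^ n := by
    calc (8 : ℝ) = 2 ^ 3 := by norm_num
      _ ≤ 2 ^ n := pow_le_pow_right₀ one_le_two hn
  rw [hsqrt, div_le_div_iff₀ (by positivity) (by norm_num)]
  linarith

/- `U(k,t)` has centre `diskCenter n t k`, and its radius is at most `diskRadius n t k`. -/
noncomputable def diskCenter (n : ℕ) (t : ℝ) (k : ℤ) : ℝ := (2 * π * k + π * t) ^ n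

noncomputable def diskRadius (n : ℕ) (t : ℝ) (k : ℤ) : ℝ :=
  3 / 10 * π ^ n * max |2 * k + t| 1 ^ (n - 2)

section Disks

variable {n : ℕ} {t : ℝ}

lemma diskRadius_nonneg (k : ℤ) : 0 ≤ diskRadius n t k := by
  unfold diskRadius; positivity

lemma diskRadius_add_diskRadius_succ_lt (hn : Odd n) (hn1 : 1 < n) (k : ℤ) :
    diskRadius n t k + diskRadius n t (k + 1) < diskCenter n t (k + 1) - diskCenter n t k := by
  obtain ⟨p, rfl⟩ : ∃ p, n = p + 2 := ⟨n - 2, by omega⟩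
  have hp : Odd p := by simpa [Nat.odd_add] using hn
  have hgap := mul_lt_mul_of_pos_left (three_tenths_max_pow_lt_pow_sub_pow hp (2 * k + t))
    (pow_pos pi_pos (p + 2))
  have hcenter : ∀ x : ℝ, (2 * π * x + π * t) ^ (p + 2) = π ^ (p + 2) * (2 * x + t) ^ (p + 2) :=
    fun x => by rw [← mul_pow]; ring
  simp only [diskCenter, diskRadius, hcenter, Nat.add_sub_cancel]
  push_cast
  rw [show 2 * ((k : ℝ) + 1) + t = 2 * k + t + 2 by ring]
  linarith

lemma pi_pow_div_five_le_diskRadius (k : ℤ) : π ^ n / 5 ≤ diskRadius n t k := by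
  have hπ := pow_pos pi_pos n
  have h1 : 1 ≤ max |2 * k + t| 1 ^ (n - 2) := one_le_pow₀ (le_max_right _ _)
  unfold diskRadius
  nlinarith

lemma abs_pow_mul_le_diskRadius (k : ℤ) :
    3 / 10 * |2 * k + t| ^ (n - 2) * π ^ n ≤ diskRadius n t k := by
  rw [mul_right_comm]
  unfold diskRadius
  gcongr
  exact le_max_left _ _

lemma mul_abs_pow_le_diskRadius (hn : 2 ≤ n) {C : ℝ} (hC : C ≤ π ^ 2 / 5) (k : ℤ) :
    3 / 2 * π ^ (n - 2) * C * |2 * (k : ℝ) + t| ^ (n - 2) ≤ diskRadius n t k := by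
  refine le_trans ?_ (abs_pow_mul_le_diskRadius k)
  have hπ : π ^ n = π ^ (n - 2) * π ^ 2 := by rw [← pow_add, Nat.sub_add_cancel hn]
  calc 3 / 2 * π ^ (n - 2) * C * |2 * (k : ℝ) + t| ^ (n - 2)
      = 3 / 2 * π ^ (n - 2) * |2 * (k : ℝ) + t| ^ (n - 2) * C := by ring
    _ ≤ 3 / 2 * π ^ (n - 2) * |2 * (k : ℝ) + t| ^ (n - 2) * (π ^ 2 / 5) := by gcongr
    _ = 3 / 10 * |2 * (k : ℝ) + t| ^ (n - 2) * π ^ n := by rw [hπ]; ring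

end Disks

theorem stmt14_general (n : ℕ) (hn : Odd n) (hn1 : 1 < n)
    (t : ℝ)
    (C : ℝ) (hCs : C ≤ π ^ 2 * (2 : ℝ) ^ (-(n : ℝ) + 1 / 2))
    (U : ℤ → Set ℂ)
    (hU0 : U 0 = {lam : ℂ | ‖lam - ((π * t) ^ n : ℝ)‖ < π ^ n / 5})
    (hU1 : U 1 = {lam : ℂ |
      ‖lam - ((2 * π + π * t) ^ n : ℝ)‖ < (3 / 10) * |2 + t| ^ (n - 2) * π ^ n})
    (hUm1 : U (-1) = {lam : ℂ |
      ‖lam - ((π * t - 2 * π) ^ n : ℝ)‖ < (3 / 10) * |t - 2| ^ (n - 2) * π ^ n})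
    (hUk : ∀ k : ℤ, 1 < |k| → U k = {lam : ℂ |
      ‖lam - ((2 * π * k + π * t) ^ n : ℝ)‖ <
        (3 / 2) * π ^ (n - 2) * C * |2 * (k : ℝ) + t| ^ (n - 2)}) :
    ∀ k l : ℤ, k ≠ l → Disjoint (closure (U k)) (closure (U l)) := by
  have hC : C ≤ π ^ 2 / 5 := hCs.trans <| (mul_le_mul_of_nonneg_left
    (two_rpow_neg_add_half_le (by obtain ⟨j, rfl⟩ := hn; omega)) (sq_nonneg π)).trans_eq (by ring)
  have hsub : ∀ k, closure (U k) ⊆ closedBall (diskCenter n t k : ℂ) (diskRadius n t k) := by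
    intro k
    obtain rfl | rfl | rfl | hk : k = 0 ∨ k = 1 ∨ k = -1 ∨ 1 < |k| := by
      cases abs_cases k <;> omega
    · rw [hU0, show diskCenter n t 0 = (π * t) ^ n by simp [diskCenter]]
      exact closure_setOf_norm_sub_lt_subset_closedBall (pi_pow_div_five_le_diskRadius 0)
    · rw [hU1, show diskCenter n t 1 = (2 * π + π * t) ^ n by simp [diskCenter]]
      exact closure_setOf_norm_sub_lt_subset_closedBall
        (by simpa using abs_pow_mul_le_diskRadius (n := n) (t := t) 1)
    · rw [hUm1, show diskCenter n t (-1) = (π * t - 2 * π) ^ n by simp [diskCenter]; ring_nf]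
      have h := abs_pow_mul_le_diskRadius (n := n) (t := t) (-1)
      rw [show 2 * ((-1 : ℤ) : ℝ) + t = t - 2 by push_cast; ring] at h
      exact closure_setOf_norm_sub_lt_subset_closedBall h
    · rw [hUk k hk]
      exact closure_setOf_norm_sub_lt_subset_closedBall
        (mul_abs_pow_le_diskRadius (by omega) hC k)
  intro k l hkl
  exact (pairwise_disjoint_closedBall_ofReal diskRadius_nonneg
    (diskRadius_add_diskRadius_succ_lt hn hn1) hkl).mono (hsub k) (hsub l)

theorem stmt14 (n : ℕ) (hn : Odd n) (hn1 : 1 < n)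
    (t : ℝ) (ht : t ∈ Set.Ioc (-1 : ℝ) 1)
    (C : ℝ) (hC : 0 < C) (hCs : C ≤ π ^ 2 * (2 : ℝ) ^ (-(n : ℝ) + 1 / 2))
    (U : ℤ → Set ℂ)
    (hU0 : U 0 = {lam : ℂ | ‖lam - ((π * t) ^ n : ℝ)‖ < π ^ n / 5})
    (hU1 : U 1 = {lam : ℂ |
      ‖lam - ((2 * π + π * t) ^ n : ℝ)‖ < (3 / 10) * |2 + t| ^ (n - 2) * π ^ n})
    (hUm1 : U (-1) = {lam : ℂ |
      ‖lam - ((π * t - 2 * π) ^ n : ℝ)‖ < (3 / 10) * |t - 2| ^ (n - 2) * π ^ n})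
    (hUk : ∀ k : ℤ, 1 < |k| → U k = {lam : ℂ |
      ‖lam - ((2 * π * k + π * t) ^ n : ℝ)‖ <
        (3 / 2) * π ^ (n - 2) * C * |2 * (k : ℝ) + t| ^ (n - 2)}) :
    ∀ k l : ℤ, k ≠ l → Disjoint (closure (U k)) (closure (U l)) :=
  stmt14_general n hn hn1 t C hCs U hU0 hU1 hUm1 hUk
end

section
/- Let n be an odd integer greater than 1, t ∈ (-1,1], N a positive integer, and C > 0 with N ≥ π^{-2}C + 1. Suppose λ ∈ ℂ with Re λ ∈ [(-2πN+π+πt)ⁿ, (2πN-π+πt)ⁿ), and suppose Ψ ∈ L²[0,1] with ‖Ψ‖ = 1 satisfies, with e_p(x) = exp(i(2πp+πt)x), the bounds |⟨Ψ,e_p⟩|² < π^{-4}C²|2p+t|^{2(n-2)}/((2N+t-1)ⁿ-(2p+t)ⁿ)² for every integer p > N and |⟨Ψ,e_p⟩|² ≤ π^{-4}C²|2p+t|^{2(n-2)}/((-2N+t+1)ⁿ-(2p+t)ⁿ)² for every integer p < -N. Then Σ_{|p|>N}|⟨Ψ,e_p⟩|² < 5/64 + 1/48 < 1/10. -/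
open Real Complex MeasureTheory intervalIntegral

noncomputable def l2norm (f : ℝ → ℂ) : ℝ :=
  Real.sqrt (∫ x in (0:ℝ)..1, ‖f x‖ ^ 2)

noncomputable def l2inner (f g : ℝ → ℂ) : ℂ :=
  ∫ x in (0:ℝ)..1, f x * (starRingEnd ℂ) (g x)

private lemma core_bound (n : ℕ) (hn3 : 3 ≤ n) (c A B : ℝ) (i : ℕ)
    (hc : 0 < c) (hA : 0 < A) (hB : 0 ≤ B)
    (hAB : A - B = 2 * (i:ℝ) + 3) (hAB4 : 4 * c ≤ A + B) :
    c ^ 2 * A ^ (2 * (n - 2)) / (A ^ n - B ^ n) ^ 2 ≤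
      1 / 64 * (1 / ((i:ℝ) + 1) - 1 / ((i:ℝ) + 2)) := by
  have hBA : B < A := by nlinarith
  have hQ : (0:ℝ) < A ^ (n - 2) := pow_pos hA _
  have hpow : B ^ n < A ^ n := by
    apply pow_lt_pow_left₀ hBA hB
    omega
  have hD : (0:ℝ) < A ^ n - B ^ n := sub_pos.mpr hpow
  have hgs : (∑ j ∈ Finset.range n, A ^ j * B ^ (n - 1 - j)) * (A - B) = A ^ n - B ^ n :=
    geom_sum₂_mul A B n
  have hterms : A ^ (n-1) + A ^ (n-2) * B ≤ ∑ j ∈ Finset.range n, A ^ j * B ^ (n - 1 - j) := by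
    have hsub : ({n-2, n-1} : Finset ℕ) ⊆ Finset.range n := by
      intro j hj
      simp only [Finset.mem_insert, Finset.mem_singleton] at hj
      rw [Finset.mem_range]; omega
    have hle := Finset.sum_le_sum_of_subset_of_nonneg (f := fun j => A ^ j * B ^ (n - 1 - j))
      hsub (fun j _ _ => mul_nonneg (pow_nonneg hA.le j) (pow_nonneg hB _))
    calc A ^ (n-1) + A ^ (n-2) * B
        = ∑ j ∈ ({n-2, n-1} : Finset ℕ), A ^ j * B ^ (n - 1 - j) := by
          rw [Finset.sum_pair (by omega : n-2 ≠ n-1)]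
          have e1 : n - 1 - (n-2) = 1 := by omega
          have e2 : n - 1 - (n-1) = 0 := by omega
          rw [e1, e2, pow_one, pow_zero, mul_one]
          ring
      _ ≤ _ := hle
  have hAexp : A ^ (n-1) + A ^ (n-2) * B = A ^ (n-2) * (A + B) := by
    have h1 : A ^ (n-1) = A ^ (n-2) * A := by
      rw [← pow_succ]
      congr 1
      omega
    rw [h1]; ring
  have hABnn : (0:ℝ) ≤ A - B := le_of_lt (sub_pos.mpr hBA)
  have hmain : (2 * (i:ℝ) + 3) * (A ^ (n-2) * (A + B)) ≤ A ^ n - B ^ n := by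
    calc (2 * (i:ℝ) + 3) * (A ^ (n-2) * (A + B))
        = (A ^ (n-1) + A ^ (n-2) * B) * (A - B) := by rw [hAexp, hAB]; ring
      _ ≤ (∑ j ∈ Finset.range n, A ^ j * B ^ (n - 1 - j)) * (A - B) :=
          mul_le_mul_of_nonneg_right hterms hABnn
      _ = A ^ n - B ^ n := hgs
  have hi1 : (0:ℝ) < (i:ℝ) + 1 := by positivity
  have hi2 : (0:ℝ) < (i:ℝ) + 2 := by positivity
  have hABp : (0:ℝ) < A + B := by nlinarith
  have hRHS : 1 / 64 * (1 / ((i:ℝ) + 1) - 1 / ((i:ℝ) + 2))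
      = 1 / (64 * (((i:ℝ) + 1) * ((i:ℝ) + 2))) := by
    field_simp
    ring
  rw [hRHS]
  have hmpos : (0:ℝ) < (2 * (i:ℝ) + 3) * (A ^ (n-2) * (A + B)) := by positivity
  have step1 : c ^ 2 * A ^ (2 * (n - 2)) / (A ^ n - B ^ n) ^ 2
      ≤ c ^ 2 * A ^ (2 * (n - 2)) / ((2 * (i:ℝ) + 3) * (A ^ (n-2) * (A + B))) ^ 2 := by
    gcongr
  have step2 : c ^ 2 * A ^ (2 * (n - 2)) / ((2 * (i:ℝ) + 3) * (A ^ (n-2) * (A + B))) ^ 2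
      = c ^ 2 / ((2 * (i:ℝ) + 3) ^ 2 * (A + B) ^ 2) := by
    rw [pow_mul']
    field_simp
  have step3 : c ^ 2 / ((2 * (i:ℝ) + 3) ^ 2 * (A + B) ^ 2)
      ≤ 1 / (64 * (((i:ℝ) + 1) * ((i:ℝ) + 2))) := by
    rw [div_le_div_iff₀ (by positivity) (by positivity)]
    have h16 : (4 * c) ^ 2 ≤ (A + B) ^ 2 := by
      apply pow_le_pow_left₀ (by positivity) hAB4
    nlinarith [sq_nonneg c, mul_pos hi1 hi2, sq_nonneg ((i:ℝ)), hc.le]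
  calc c ^ 2 * A ^ (2 * (n - 2)) / (A ^ n - B ^ n) ^ 2
      ≤ c ^ 2 * A ^ (2 * (n - 2)) / ((2 * (i:ℝ) + 3) * (A ^ (n-2) * (A + B))) ^ 2 := step1
    _ = c ^ 2 / ((2 * (i:ℝ) + 3) ^ 2 * (A + B) ^ 2) := step2
    _ ≤ _ := step3

theorem stmt16 (n : ℕ) (hn : Odd n) (hn1 : 1 < n)
    (t : ℝ) (ht : t ∈ Set.Ioc (-1 : ℝ) 1)
    (N : ℤ) (hNpos : 0 < N) (C : ℝ) (hC : 0 < C) (hN : (N : ℝ) ≥ C / π ^ 2 + 1)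
    (lam : ℂ)
    (hlam : lam.re ∈ Set.Ico ((-(2 * π * N) + π + π * t) ^ n) ((2 * π * N - π + π * t) ^ n))
    (Ψ : ℝ → ℂ)
    (hΨL2 : MeasureTheory.MemLp Ψ 2 (volume.restrict (Set.Ioc (0:ℝ) 1)))
    (hΨ : l2norm Ψ = 1)
    (e : ℤ → ℝ → ℂ)
    (he : ∀ p : ℤ, ∀ x : ℝ, e p x = Complex.exp (Complex.I * (2 * π * p + π * t) * x))
    (hpos : ∀ p : ℤ, p > N →
      ‖l2inner Ψ (e p)‖ ^ 2 <
        C ^ 2 * |2 * (p : ℝ) + t| ^ (2 * (n - 2)) /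
          (π ^ 4 * ((2 * (N : ℝ) + t - 1) ^ n - (2 * (p : ℝ) + t) ^ n) ^ 2))
    (hneg : ∀ p : ℤ, p < -N →
      ‖l2inner Ψ (e p)‖ ^ 2 ≤
        C ^ 2 * |2 * (p : ℝ) + t| ^ (2 * (n - 2)) /
          (π ^ 4 * ((-(2 * (N : ℝ)) + t + 1) ^ n - (2 * (p : ℝ) + t) ^ n) ^ 2)) :
    (∑' p : {p : ℤ // N < |p|}, ‖l2inner Ψ (e p)‖ ^ 2 < 5 / 64 + 1 / 48) ∧
    (5 / 64 + 1 / 48 : ℝ) < 1 / 10 := by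
  refine ⟨?_, by norm_num⟩
  have hπ := Real.pi_pos
  have hn3 : 3 ≤ n := by
    rcases hn with ⟨m, hm⟩; omega
  obtain ⟨ht1, ht2⟩ := ht
  set c : ℝ := C / π ^ 2 with hc_def
  have hcpos : 0 < c := div_pos hC (by positivity)
  have hN1 : (1:ℝ) ≤ (N:ℝ) := by exact_mod_cast hNpos
  set φ : {p : ℤ // N < |p|} → Bool × ℕ :=
    fun p => (decide (0 < p.val), p.val.natAbs - (N+1).toNat) with hφ
  set g : Bool × ℕ → ℝ := fun q => 1 / 64 * (1 / ((q.2:ℝ) + 1) - 1 / ((q.2:ℝ) + 2)) with hg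
  have hg0 : ∀ q : Bool × ℕ, 0 ≤ g q := by
    intro q
    rw [hg]
    dsimp only
    have h1 : (0:ℝ) < (q.2:ℝ) + 1 := by positivity
    have h2 : 1 / ((q.2:ℝ) + 2) ≤ 1 / ((q.2:ℝ) + 1) := by
      apply one_div_le_one_div_of_le h1
      linarith
    linarith
  -- key per-term bound
  have key : ∀ p : {p : ℤ // N < |p|},
      ‖l2inner Ψ (e ↑p)‖ ^ 2 ≤ g (φ p) := by
    intro p
    obtain ⟨q, hq⟩ := p
    have hq' : N < (q.natAbs : ℤ) := by rwa [Int.abs_eq_natAbs] at hq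
    by_cases h0 : 0 < q
    · -- positive side
      have hpq : N < q := by omega
      have hqR : (N:ℝ) + 1 ≤ (q:ℝ) := by exact_mod_cast hpq
      have hiZ : ((q.natAbs - (N+1).toNat : ℕ) : ℤ) = q - N - 1 := by omega
      have hiR : ((q.natAbs - (N+1).toNat : ℕ) : ℝ) = (q:ℝ) - (N:ℝ) - 1 := by
        exact_mod_cast hiZ
      have hApos : (0:ℝ) < 2 * (q:ℝ) + t := by linarith
      have hBnn : (0:ℝ) ≤ 2 * (N:ℝ) + t - 1 := by linarith
      have habs : |2 * (q:ℝ) + t| = 2 * (q:ℝ) + t := abs_of_pos hApos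
      have hEq : C ^ 2 * |2 * (q:ℝ) + t| ^ (2 * (n - 2)) /
            (π ^ 4 * ((2 * (N:ℝ) + t - 1) ^ n - (2 * (q:ℝ) + t) ^ n) ^ 2)
          = c ^ 2 * (2 * (q:ℝ) + t) ^ (2 * (n - 2)) /
            ((2 * (q:ℝ) + t) ^ n - (2 * (N:ℝ) + t - 1) ^ n) ^ 2 := by
        rw [habs]
        rw [show ((2 * (N:ℝ) + t - 1) ^ n - (2 * (q:ℝ) + t) ^ n) ^ 2
            = ((2 * (q:ℝ) + t) ^ n - (2 * (N:ℝ) + t - 1) ^ n) ^ 2 from by ring]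
        rw [hc_def]
        conv_rhs => rw [div_pow, show ((π:ℝ)^2)^2 = π^4 from by ring,
          div_mul_eq_mul_div, div_div]
      have hcore := core_bound n hn3 c (2 * (q:ℝ) + t) (2 * (N:ℝ) + t - 1)
        (q.natAbs - (N+1).toNat) hcpos hApos hBnn
        (by rw [hiR]; ring) (by rw [hc_def] at hN ⊢; linarith)
      calc ‖l2inner Ψ (e q)‖ ^ 2
          ≤ C ^ 2 * |2 * (q:ℝ) + t| ^ (2 * (n - 2)) /
            (π ^ 4 * ((2 * (N:ℝ) + t - 1) ^ n - (2 * (q:ℝ) + t) ^ n) ^ 2) :=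
            (hpos q hpq).le
        _ = c ^ 2 * (2 * (q:ℝ) + t) ^ (2 * (n - 2)) /
            ((2 * (q:ℝ) + t) ^ n - (2 * (N:ℝ) + t - 1) ^ n) ^ 2 := hEq
        _ ≤ 1 / 64 * (1 / (((q.natAbs - (N+1).toNat : ℕ):ℝ) + 1) -
              1 / (((q.natAbs - (N+1).toNat : ℕ):ℝ) + 2)) := hcore
        _ = g (φ ⟨q, hq⟩) := by rw [hg, hφ]
    · -- negative side
      have hpq : q < -N := by omega
      have hqR : (q:ℝ) ≤ -(N:ℝ) - 1 := by
        have : q ≤ -N - 1 := by omega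
        exact_mod_cast this
      have hiZ : ((q.natAbs - (N+1).toNat : ℕ) : ℤ) = -q - N - 1 := by omega
      have hiR : ((q.natAbs - (N+1).toNat : ℕ) : ℝ) = -(q:ℝ) - (N:ℝ) - 1 := by
        exact_mod_cast hiZ
      have hApos : (0:ℝ) < -(2 * (q:ℝ) + t) := by linarith
      have hBnn : (0:ℝ) ≤ 2 * (N:ℝ) - t - 1 := by linarith
      have habs : |2 * (q:ℝ) + t| = -(2 * (q:ℝ) + t) := abs_of_neg (by linarith)
      have hden : (-(2 * (N:ℝ)) + t + 1) ^ n - (2 * (q:ℝ) + t) ^ n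
          = (-(2 * (q:ℝ) + t)) ^ n - (2 * (N:ℝ) - t - 1) ^ n := by
        have e1 : (-(2 * (N:ℝ)) + t + 1) = -(2 * (N:ℝ) - t - 1) := by ring
        rw [e1, hn.neg_pow, hn.neg_pow]
        ring
      have hEq : C ^ 2 * |2 * (q:ℝ) + t| ^ (2 * (n - 2)) /
            (π ^ 4 * ((-(2 * (N:ℝ)) + t + 1) ^ n - (2 * (q:ℝ) + t) ^ n) ^ 2)
          = c ^ 2 * (-(2 * (q:ℝ) + t)) ^ (2 * (n - 2)) /
            ((-(2 * (q:ℝ) + t)) ^ n - (2 * (N:ℝ) - t - 1) ^ n) ^ 2 := by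
        rw [habs, hden, hc_def]
        conv_rhs => rw [div_pow, show ((π:ℝ)^2)^2 = π^4 from by ring,
          div_mul_eq_mul_div, div_div]
      have hcore := core_bound n hn3 c (-(2 * (q:ℝ) + t)) (2 * (N:ℝ) - t - 1)
        (q.natAbs - (N+1).toNat) hcpos hApos hBnn
        (by rw [hiR]; ring) (by rw [hc_def] at hN ⊢; linarith)
      calc ‖l2inner Ψ (e q)‖ ^ 2
          ≤ C ^ 2 * |2 * (q:ℝ) + t| ^ (2 * (n - 2)) /
            (π ^ 4 * ((-(2 * (N:ℝ)) + t + 1) ^ n - (2 * (q:ℝ) + t) ^ n) ^ 2) :=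
            hneg q hpq
        _ = c ^ 2 * (-(2 * (q:ℝ) + t)) ^ (2 * (n - 2)) /
            ((-(2 * (q:ℝ) + t)) ^ n - (2 * (N:ℝ) - t - 1) ^ n) ^ 2 := hEq
        _ ≤ 1 / 64 * (1 / (((q.natAbs - (N+1).toNat : ℕ):ℝ) + 1) -
              1 / (((q.natAbs - (N+1).toNat : ℕ):ℝ) + 2)) := hcore
        _ = g (φ ⟨q, hq⟩) := by rw [hg, hφ]
  -- finite-sum bound
  have hsum_bound : ∀ u : Finset {p : ℤ // N < |p|},
      ∑ p ∈ u, ‖l2inner Ψ (e ↑p)‖ ^ 2 ≤ 1 / 32 := by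
    intro u
    have h1 : ∑ p ∈ u, ‖l2inner Ψ (e ↑p)‖ ^ 2 ≤ ∑ p ∈ u, g (φ p) :=
      Finset.sum_le_sum (fun p _ => key p)
    have hinj : ∀ x ∈ u, ∀ y ∈ u, φ x = φ y → x = y := by
      intro x _ y _ hxy
      have hb : (0 < x.val) ↔ (0 < y.val) := by
        have h := congrArg Prod.fst hxy
        rw [hφ] at h
        simpa using h
      have hnn : x.val.natAbs - (N+1).toNat = y.val.natAbs - (N+1).toNat := by
        have h := congrArg Prod.snd hxy
        rw [hφ] at h
        simpa using h
      have hx2 : N < (x.val.natAbs : ℤ) := by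
        have := x.2; rwa [Int.abs_eq_natAbs] at this
      have hy2 : N < (y.val.natAbs : ℤ) := by
        have := y.2; rwa [Int.abs_eq_natAbs] at this
      ext
      omega
    have h2 : ∑ p ∈ u, g (φ p) = ∑ q ∈ u.image φ, g q := (Finset.sum_image hinj).symm
    set K : ℕ := (u.image φ).sup Prod.snd + 1 with hK
    have hsubset : u.image φ ⊆ (Finset.univ : Finset Bool) ×ˢ Finset.range K := by
      intro q hqq
      rw [Finset.mem_product]
      exact ⟨Finset.mem_univ _, Finset.mem_range.mpr (Nat.lt_succ_of_le (Finset.le_sup hqq))⟩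
    have h3 : ∑ q ∈ u.image φ, g q
        ≤ ∑ q ∈ (Finset.univ : Finset Bool) ×ˢ Finset.range K, g q :=
      Finset.sum_le_sum_of_subset_of_nonneg hsubset (fun q _ _ => hg0 q)
    have htel : ∑ i ∈ Finset.range K, (1 / ((i:ℝ) + 1) - 1 / ((i:ℝ) + 2)) ≤ 1 := by
      have hts := Finset.sum_range_sub' (f := fun i : ℕ => 1 / ((i:ℝ) + 1)) K
      have hcongr : ∑ i ∈ Finset.range K, (1 / ((i:ℝ) + 1) - 1 / ((i:ℝ) + 2))
          = ∑ i ∈ Finset.range K,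
              ((fun i : ℕ => 1 / ((i:ℝ) + 1)) i - (fun i : ℕ => 1 / ((i:ℝ) + 1)) (i+1)) := by
        apply Finset.sum_congr rfl
        intro i _
        push_cast
        ring
      rw [hcongr, hts]
      have hKpos : (0:ℝ) ≤ 1 / ((K:ℝ) + 1) := by positivity
      norm_num
      positivity
    have h4 : ∑ q ∈ (Finset.univ : Finset Bool) ×ˢ Finset.range K, g q ≤ 1 / 32 := by
      rw [Finset.sum_product]
      have hbval : ∀ b : Bool, ∑ i ∈ Finset.range K, g (b, i)
          = 1 / 64 * ∑ i ∈ Finset.range K, (1 / ((i:ℝ) + 1) - 1 / ((i:ℝ) + 2)) := by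
        intro b
        rw [Finset.mul_sum]
      rw [Finset.sum_congr rfl (fun b _ => hbval b), Finset.sum_const, Finset.card_univ,
        Fintype.card_bool, nsmul_eq_mul]
      push_cast
      linarith [htel]
    linarith [h1, h2.le, h3, h4]
  calc ∑' p : {p : ℤ // N < |p|}, ‖l2inner Ψ (e ↑p)‖ ^ 2
      ≤ 1 / 32 := tsum_le_of_sum_le' (by norm_num) hsum_bound
    _ < 5 / 64 + 1 / 48 := by norm_num
end
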